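/- Let V : [0,∞) → [0,∞) be continuously differentiable and satisfy V'(t) ≤ −α V(t) + β₁ V(t)^{3/2} + β₂ V(t)² for constants α, β₁, β₂ > 0. Suppose V(0) < K₂ where K₂ = (−β₂²√(β₁²(2αβ₂+β₁²)/β₂⁴) + αβ₂ + β₁²)/(2β₂²), and K₂ > 0. Then V(t) ≤ V(0) e^{−(α/2) t} for all t ≥ 0. -/

import Mathlib

set_option maxHeartbeats 1600000 in
theorem local_exponential_decay (V : ℝ → ℝ) (α β₁ β₂ K₂ : ℝ)
    (hα : 0 < α) (hβ₁ : 0 < β₁) (hβ₂ : 0 < β₂)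
    (hVnn : ∀ t, 0 ≤ t → 0 ≤ V t)
    (hVdiff : Differentiable ℝ V) (hVcont : Continuous (deriv V))
    (hVdot : ∀ t, 0 ≤ t →
      deriv V t ≤ -α * V t + β₁ * V t ^ ((3 : ℝ) / 2) + β₂ * V t ^ 2)
    (hK₂ : K₂ = (-(β₂ ^ 2) * Real.sqrt (β₁ ^ 2 * (2 * α * β₂ + β₁ ^ 2) / β₂ ^ 4)
      + α * β₂ + β₁ ^ 2) / (2 * β₂ ^ 2))
    (hK₂pos : 0 < K₂) (hV0 : V 0 < K₂) :
    ∀ t, 0 ≤ t → V t ≤ V 0 * Real.exp (-(α / 2) * t) := by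
  obtain ⟨s, hs⟩ : ∃ x : ℝ, x = Real.sqrt (β₁ ^ 2 + 2 * α * β₂) := ⟨_, rfl⟩
  have hs0 : 0 ≤ s := hs ▸ Real.sqrt_nonneg _
  have hs2 : s ^ 2 = β₁ ^ 2 + 2 * α * β₂ := by
    rw [hs]; exact Real.sq_sqrt (by positivity)
  have hsβ : β₁ ≤ s := by nlinarith
  have harg : β₁ ^ 2 * (2 * α * β₂ + β₁ ^ 2) / β₂ ^ 4 = (β₁ * s / β₂ ^ 2) ^ 2 := by
    field_simp
    linear_combination (-1) * hs2
  have hK₂' : K₂ = (α * β₂ + β₁ ^ 2 - β₁ * s) / (2 * β₂ ^ 2) := by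
    rw [hK₂, harg, Real.sqrt_sq (by positivity)]
    field_simp
    ring
  obtain ⟨r, hr⟩ : ∃ x : ℝ, x = (s - β₁) / (2 * β₂) := ⟨_, rfl⟩
  have hr0 : 0 ≤ r := hr ▸ div_nonneg (by linarith) (by positivity)
  have hrK : K₂ = r ^ 2 := by
    rw [hK₂', hr]
    field_simp
    nlinarith
  have hrid : β₁ * r + β₂ * r ^ 2 = α / 2 := by
    rw [hr]
    field_simp
    nlinarith
  -- key arithmetic lemma
  have key : ∀ v : ℝ, 0 ≤ v → v ≤ K₂ →
      -α * v + β₁ * v ^ ((3 : ℝ) / 2) + β₂ * v ^ 2 ≤ -(α / 2) * v := by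
    intro v hv0 hvK
    obtain ⟨u, hu⟩ : ∃ x : ℝ, x = Real.sqrt v := ⟨_, rfl⟩
    have hu0 : 0 ≤ u := hu ▸ Real.sqrt_nonneg _
    have hu2 : u ^ 2 = v := by rw [hu]; exact Real.sq_sqrt hv0
    have hur : u ≤ r := by
      have h := Real.sqrt_le_sqrt hvK
      rw [hrK, Real.sqrt_sq hr0] at h
      rw [hu]; exact h
    have hpow : v ^ ((3 : ℝ) / 2) = u ^ 3 := by
      rw [hu, ← Real.rpow_natCast (Real.sqrt v) 3, Real.sqrt_eq_rpow,
        ← Real.rpow_mul hv0]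
      norm_num
    rw [hpow, ← hu2]
    have h1 : β₁ * u + β₂ * u ^ 2 ≤ α / 2 := by nlinarith
    nlinarith [sq_nonneg u, mul_nonneg (mul_nonneg hu0 hu0) hu0,
      mul_le_mul_of_nonneg_right h1 (sq_nonneg u)]
  -- derivative of W
  have hCV : Continuous V := hVdiff.continuous
  have hWd : ∀ t : ℝ, HasDerivAt (fun t => V t * Real.exp (α / 2 * t))
      (deriv V t * Real.exp (α / 2 * t) + V t * (Real.exp (α / 2 * t) * (α / 2))) t := by
    intro t
    have h := ((hVdiff t).hasDerivAt).mul (((hasDerivAt_id t).const_mul (α / 2)).exp)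
    simp only [id_eq, mul_one] at h
    exact h
  -- monotonicity lemma
  have mono : ∀ a b : ℝ, 0 ≤ a → a ≤ b → (∀ x ∈ Set.Icc a b, V x ≤ K₂) →
      V b * Real.exp (α / 2 * b) ≤ V a * Real.exp (α / 2 * a) := by
    intro a b ha hab hbd
    have hanti : AntitoneOn (fun t => V t * Real.exp (α / 2 * t)) (Set.Icc a b) := by
      apply antitoneOn_of_deriv_nonpos (convex_Icc a b)
      · exact fun x _ => ((hWd x).differentiableAt).continuousAt.continuousWithinAt
      · intro x _
        exact ((hWd x).differentiableAt).differentiableWithinAt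
      · intro x hx
        rw [interior_Icc] at hx
        have hx0 : 0 ≤ x := le_of_lt (lt_of_le_of_lt ha hx.1)
        have hVx : V x ≤ K₂ := hbd x ⟨le_of_lt hx.1, le_of_lt hx.2⟩
        rw [(hWd x).deriv]
        have h1 := hVdot x hx0
        have h2 := key (V x) (hVnn x hx0) hVx
        have hep : 0 < Real.exp (α / 2 * x) := Real.exp_pos _
        nlinarith [mul_le_mul_of_nonneg_right (h1.trans h2) hep.le]
    exact hanti (Set.left_mem_Icc.mpr hab) (Set.right_mem_Icc.mpr hab) hab
  have hV00 : 0 ≤ V 0 := hVnn 0 le_rfl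
  -- invariance: V t < K₂ for all t ≥ 0
  have inv : ∀ t, 0 ≤ t → V t < K₂ := by
    by_contra h
    push_neg at h
    obtain ⟨t₁, ht₁0, ht₁⟩ := h
    set B : Set ℝ := {t | 0 ≤ t ∧ K₂ ≤ V t} with hB
    have hBc : IsClosed B := by
      have : B = Set.Ici (0:ℝ) ∩ V ⁻¹' Set.Ici K₂ := rfl
      rw [this]
      exact isClosed_Ici.inter (isClosed_Ici.preimage hCV)
    have hBne : B.Nonempty := ⟨t₁, ht₁0, ht₁⟩
    have hBbd : BddBelow B := ⟨0, fun x hx => hx.1⟩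
    have ht₀B : sInf B ∈ B := hBc.csInf_mem hBne hBbd
    set t₀ : ℝ := sInf B with ht₀
    have ht₀0 : 0 ≤ t₀ := ht₀B.1
    have ht₀pos : 0 < t₀ := by
      rcases lt_or_eq_of_le ht₀0 with h | h
      · exact h
      · exfalso; rw [← h] at ht₀B; exact absurd ht₀B.2 (not_le.mpr hV0)
    have hlt : ∀ x, 0 ≤ x → x < t₀ → V x < K₂ := by
      intro x hx0 hxt
      by_contra hxa
      push_neg at hxa
      exact absurd (csInf_le hBbd ⟨hx0, hxa⟩) (not_le.mpr hxt)
    have hle : ∀ x ∈ Set.Icc (0:ℝ) t₀, V x ≤ K₂ := by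
      intro x hx
      rcases lt_or_eq_of_le hx.2 with h | h
      · exact le_of_lt (hlt x hx.1 h)
      · rw [h]
        have htd : Filter.Tendsto V (nhdsWithin t₀ (Set.Iio t₀)) (nhds (V t₀)) :=
          (hCV.continuousAt).continuousWithinAt.tendsto
        refine le_of_tendsto htd ?_
        have hev : ∀ᶠ y in nhdsWithin t₀ (Set.Iio t₀), 0 < y :=
          (eventually_gt_nhds ht₀pos).filter_mono nhdsWithin_le_nhds
        filter_upwards [self_mem_nhdsWithin, hev] with y hy hy0
        exact le_of_lt (hlt y hy0.le hy)
    have hm := mono 0 t₀ le_rfl ht₀0 hle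
    have hep : 0 < Real.exp (α / 2 * t₀) := Real.exp_pos _
    have he1 : (1:ℝ) ≤ Real.exp (α / 2 * t₀) := by
      rw [← Real.exp_zero]
      exact Real.exp_le_exp.mpr (by positivity)
    rw [mul_zero, Real.exp_zero, mul_one] at hm
    have hVt0 : V t₀ ≤ V 0 := by nlinarith [hVnn t₀ ht₀0]
    exact absurd ht₀B.2 (not_le.mpr (lt_of_le_of_lt hVt0 hV0))
  -- finish
  intro t ht
  have h1 := mono 0 t le_rfl ht (fun x hx => le_of_lt (inv x hx.1))
  rw [mul_zero, Real.exp_zero, mul_one] at h1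
  have hep : 0 < Real.exp (α / 2 * t) := Real.exp_pos _
  have heq : V 0 * Real.exp (-(α / 2) * t) = V 0 / Real.exp (α / 2 * t) := by
    rw [eq_div_iff (ne_of_gt hep), mul_assoc, ← Real.exp_add]
    ring_nf
    rw [Real.exp_zero, mul_one]
  rw [heq, le_div_iff₀ hep]
  exact h1
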